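/- Let Q₁, Q₂ ∈ ℤ[x] have 0 as a root with multiplicities p, q ≥ 1 respectively, and let A, B be positive integers. Set F(n,m) = Q₁(A^n n!) · Q₂(B^m m!). Then there exists ε > 0 such that N(F(n,m))^{1+ε} / F(n,m) → 0 as (n,m) → ∞ (i.e., as min(n,m) → ∞), where N denotes the radical, assuming F(n,m) > 0 for all large n, m. -/
import Mathlib


open Filter Polynomial

/-- The radical of a natural number: product of its distinct prime factors. -/
def natRadical (a : ℕ) : ℕ := ∏ p ∈ a.primeFactors, p

lemma natRadical_dvd (a : ℕ) : natRadical a ∣ a := Nat.prod_primeFactors_dvd a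

lemma natRadical_pos (a : ℕ) : 0 < natRadical a :=
  Finset.prod_pos fun _ hp => (Nat.prime_of_mem_primeFactors hp).pos

lemma natRadical_le {a : ℕ} (ha : 0 < a) : natRadical a ≤ a :=
  Nat.le_of_dvd ha (natRadical_dvd a)

lemma natRadical_mul_le {a b : ℕ} (ha : a ≠ 0) (hb : b ≠ 0) :
    natRadical (a * b) ≤ natRadical a * natRadical b := by
  have h : natRadical (a * b) ∣ natRadical a * natRadical b := by
    unfold natRadical
    rw [Nat.primeFactors_mul ha hb, ← Finset.prod_union_inter]
    exact Dvd.intro _ rfl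
  exact Nat.le_of_dvd (Nat.mul_pos (natRadical_pos a) (natRadical_pos b)) h

lemma natRadical_pow {a : ℕ} (n : ℕ) (hn : n ≠ 0) : natRadical (a ^ n) = natRadical a := by
  unfold natRadical; rw [Nat.primeFactors_pow a hn]

lemma natRadical_factorial_le (n : ℕ) : natRadical n.factorial ≤ 4 ^ n := by
  have hsub : (n.factorial).primeFactors ⊆ Finset.filter Nat.Prime (Finset.range (n + 1)) := by
    intro p hp
    have hprime := Nat.prime_of_mem_primeFactors hp
    have hdvd := Nat.dvd_of_mem_primeFactors hp
    have hle : p ≤ n := (Nat.Prime.dvd_factorial hprime).mp hdvd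
    simp [Finset.mem_filter, Finset.mem_range, Nat.lt_succ_iff, hle, hprime]
  have h1 : natRadical n.factorial ∣ primorial n :=
    Finset.prod_dvd_prod_of_subset _ _ _ hsub
  exact le_trans (Nat.le_of_dvd (primorial_pos n) h1) (primorial_le_4_pow n)

lemma abs_eval_le (Q : Polynomial ℤ) (x : ℤ) (hx : 1 ≤ x) :
    |Q.eval x| ≤ (∑ i ∈ Finset.range (Q.natDegree + 1), |Q.coeff i|) * x ^ Q.natDegree := by
  rw [Polynomial.eval_eq_sum_range (p := Q) x, Finset.sum_mul]
  refine le_trans (Finset.abs_sum_le_sum_abs _ _) (Finset.sum_le_sum fun i hi => ?_)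
  rw [abs_mul, abs_pow, abs_of_nonneg (by linarith : (0:ℤ) ≤ x)]
  exact mul_le_mul_of_nonneg_left
    (pow_le_pow_right₀ hx (Nat.lt_succ_iff.mp (Finset.mem_range.mp hi)))
    (abs_nonneg _)

lemma coeffSum_ge_one (Q : Polynomial ℤ) (hQ : Q ≠ 0) :
    1 ≤ ∑ i ∈ Finset.range (Q.natDegree + 1), |Q.coeff i| := by
  have h1 : Q.leadingCoeff ≠ 0 := Polynomial.leadingCoeff_ne_zero.mpr hQ
  have h2 : (1 : ℤ) ≤ |Q.coeff Q.natDegree| := Int.one_le_abs h1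
  refine le_trans h2 (Finset.single_le_sum (f := fun i => |Q.coeff i|)
    (fun i _ => abs_nonneg _) ?_)
  simp [Finset.mem_range]

lemma tendsto_four_pow_div_sqrt_factorial :
    Tendsto (fun n : ℕ => (4:ℝ)^n / Real.sqrt n.factorial) atTop (nhds 0) := by
  have h16 : Tendsto (fun n : ℕ => (16:ℝ)^n / n.factorial) atTop (nhds 0) :=
    FloorSemiring.tendsto_pow_div_factorial_atTop 16
  have hc : Tendsto (fun x : ℝ => Real.sqrt x) (nhds 0) (nhds 0) := by
    simpa using (Real.continuous_sqrt.tendsto 0)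
  refine (hc.comp h16).congr fun n => ?_
  simp only [Function.comp]
  rw [Real.sqrt_div' _ (by positivity)]
  congr 1
  rw [show (16:ℝ)^n = (4^n)^2 by rw [← pow_mul, mul_comm, pow_mul]; norm_num,
    Real.sqrt_sq (by positivity)]

set_option maxHeartbeats 1000000 in
/-- For `F(n,m) = Q₁(A^n n!) · Q₂(B^m m!)` with `0` a root of `Q₁, Q₂` of
multiplicities `p, q ≥ 1`, there is `ε > 0` with
`N(F(n,m))^{1+ε} / F(n,m) → 0` as `(n,m) → ∞`, assuming `F(n,m) > 0` eventually. -/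
theorem exists_eps_radical_quotient_tendsto_zero
    (Q₁ Q₂ : Polynomial ℤ) (hQ₁ : Q₁ ≠ 0) (hQ₂ : Q₂ ≠ 0)
    (p q : ℕ) (hp : 0 < p) (hq : 0 < q)
    (hmult₁ : Q₁.rootMultiplicity 0 = p) (hmult₂ : Q₂.rootMultiplicity 0 = q)
    (A B : ℕ) (hA : 0 < A) (hB : 0 < B)
    (F : ℕ → ℕ → ℤ)
    (hF : ∀ n m : ℕ, F n m =
      Q₁.eval ((A : ℤ) ^ n * n.factorial) * Q₂.eval ((B : ℤ) ^ m * m.factorial))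
    (hFpos : ∀ᶠ nm : ℕ × ℕ in atTop ×ˢ atTop, 0 < F nm.1 nm.2) :
    ∃ ε : ℝ, 0 < ε ∧
      Tendsto (fun nm : ℕ × ℕ =>
          ((natRadical (F nm.1 nm.2).natAbs : ℝ)) ^ ((1 : ℝ) + ε) / (F nm.1 nm.2 : ℝ))
        (atTop ×ˢ atTop) (nhds 0) := by
  -- factor the polynomials
  obtain ⟨R₁, hfac₁, hnd₁⟩ := Polynomial.exists_eq_pow_rootMultiplicity_mul_and_not_dvd Q₁ hQ₁ 0
  obtain ⟨R₂, hfac₂, hnd₂⟩ := Polynomial.exists_eq_pow_rootMultiplicity_mul_and_not_dvd Q₂ hQ₂ 0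
  rw [hmult₁] at hfac₁
  rw [hmult₂] at hfac₂
  simp only [map_zero, sub_zero] at hfac₁ hfac₂
  -- constants
  set D₁ := Q₁.natDegree with hD₁
  set D₂ := Q₂.natDegree with hD₂
  set C₁ : ℤ := ∑ i ∈ Finset.range (D₁ + 1), |Q₁.coeff i| with hC₁def
  set C₂ : ℤ := ∑ i ∈ Finset.range (D₂ + 1), |Q₂.coeff i| with hC₂def
  have hC₁ : (1:ℝ) ≤ (C₁ : ℝ) := by exact_mod_cast coeffSum_ge_one Q₁ hQ₁
  have hC₂ : (1:ℝ) ≤ (C₂ : ℝ) := by exact_mod_cast coeffSum_ge_one Q₂ hQ₂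
  set ε : ℝ := min 1 (min ((p:ℝ)/(2*((D₁:ℝ)+1))) ((q:ℝ)/(2*((D₂:ℝ)+1)))) with hεdef
  have hε0 : 0 < ε := by
    refine lt_min one_pos (lt_min ?_ ?_)
    · exact div_pos (by exact_mod_cast hp) (by positivity)
    · exact div_pos (by exact_mod_cast hq) (by positivity)
  have hε1 : ε ≤ 1 := min_le_left _ _
  have hεD1 : (D₁:ℝ) * ε ≤ (p:ℝ)/2 := by
    have h := le_trans (min_le_right 1 _) (min_le_left _ ((q:ℝ)/(2*((D₂:ℝ)+1)))) (a := ε)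
    have h2 : ε * (2*((D₁:ℝ)+1)) ≤ (p:ℝ) :=
      (le_div_iff₀ (by positivity : (0:ℝ) < 2*((D₁:ℝ)+1))).mp h
    nlinarith [hε0.le]
  have hεD2 : (D₂:ℝ) * ε ≤ (q:ℝ)/2 := by
    have h := le_trans (min_le_right 1 _) (min_le_right ((p:ℝ)/(2*((D₁:ℝ)+1))) _) (a := ε)
    have h2 : ε * (2*((D₂:ℝ)+1)) ≤ (q:ℝ) :=
      (le_div_iff₀ (by positivity : (0:ℝ) < 2*((D₂:ℝ)+1))).mp h
    nlinarith [hε0.le]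
  refine ⟨ε, hε0, ?_⟩
  set K : ℝ := (A:ℝ) * B * ((C₁:ℝ) * C₂) with hKdef
  have hK0 : 0 < K := by
    have hA' : (0:ℝ) < A := by exact_mod_cast hA
    have hB' : (0:ℝ) < B := by exact_mod_cast hB
    positivity
  -- the key pointwise estimate
  have key : ∀ n m : ℕ, 1 ≤ n → 1 ≤ m → 0 < F n m →
      (natRadical (F n m).natAbs : ℝ) ^ ((1:ℝ) + ε) / (F n m : ℝ) ≤
      K * ((4:ℝ)^n / Real.sqrt n.factorial * ((4:ℝ)^m / Real.sqrt m.factorial)) := by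
    intro n m hn hm hFnm
    set xn : ℕ := A^n * n.factorial with hxndef
    set yn : ℕ := B^m * m.factorial with hyndef
    have hxn1 : 1 ≤ xn := Nat.one_le_iff_ne_zero.mpr (by positivity)
    have hyn1 : 1 ≤ yn := Nat.one_le_iff_ne_zero.mpr (by positivity)
    have hxz : ((A:ℤ)^n * n.factorial) = (xn : ℤ) := by push_cast [hxndef]; ring
    have hyz : ((B:ℤ)^m * m.factorial) = (yn : ℤ) := by push_cast [hyndef]; ring
    set r : ℤ := R₁.eval (xn:ℤ) * R₂.eval (yn:ℤ) with hrdef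
    have hFeq : F n m = (xn:ℤ)^p * (yn:ℤ)^q * r := by
      rw [hF n m, hxz, hyz, hfac₁, hfac₂]; simp [hrdef]; ring
    have hxZ1 : (1:ℤ) ≤ (xn:ℤ) := by exact_mod_cast hxn1
    have hyZ1 : (1:ℤ) ≤ (yn:ℤ) := by exact_mod_cast hyn1
    have hxyp : (0:ℤ) < (xn:ℤ)^p * (yn:ℤ)^q := by positivity
    have hr : 0 < r := by nlinarith [hFeq ▸ hFnm]
    -- radical bound in ℕ
    have hFabs : (F n m).natAbs = xn^p * yn^q * r.natAbs := by
      rw [hFeq]; simp [Int.natAbs_mul, Int.natAbs_pow]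
    have hxn0 : xn ≠ 0 := by omega
    have hyn0 : yn ≠ 0 := by omega
    have hr0 : r.natAbs ≠ 0 := by simpa using hr.ne'
    have hradx : natRadical xn ≤ A * 4^n := by
      calc natRadical xn ≤ natRadical (A^n) * natRadical n.factorial :=
            natRadical_mul_le (by positivity) n.factorial_pos.ne'
        _ = natRadical A * natRadical n.factorial := by
            rw [natRadical_pow n (by omega)]
        _ ≤ A * 4^n :=
            Nat.mul_le_mul (natRadical_le hA) (natRadical_factorial_le n)
    have hrady : natRadical yn ≤ B * 4^m := by
      calc natRadical yn ≤ natRadical (B^m) * natRadical m.factorial :=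
            natRadical_mul_le (by positivity) m.factorial_pos.ne'
        _ = natRadical B * natRadical m.factorial := by
            rw [natRadical_pow m (by omega)]
        _ ≤ B * 4^m :=
            Nat.mul_le_mul (natRadical_le hB) (natRadical_factorial_le m)
    have hN : natRadical (F n m).natAbs ≤ (A * 4^n) * (B * 4^m) * r.natAbs := by
      calc natRadical (F n m).natAbs = natRadical (xn^p * yn^q * r.natAbs) := by rw [hFabs]
        _ ≤ natRadical (xn^p * yn^q) * natRadical r.natAbs :=
            natRadical_mul_le (by positivity) hr0
        _ ≤ natRadical (xn^p) * natRadical (yn^q) * r.natAbs :=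
            Nat.mul_le_mul (natRadical_mul_le (by positivity) (by positivity))
              (natRadical_le (Nat.pos_of_ne_zero hr0))
        _ = natRadical xn * natRadical yn * r.natAbs := by
            rw [natRadical_pow p hp.ne', natRadical_pow q hq.ne']
        _ ≤ (A * 4^n) * (B * 4^m) * r.natAbs :=
            Nat.mul_le_mul (Nat.mul_le_mul hradx hrady) le_rfl
    -- integer upper bound for F
    have hFub : F n m ≤ C₁ * (xn:ℤ)^D₁ * (C₂ * (yn:ℤ)^D₂) := by
      have h1 := abs_eval_le Q₁ (xn:ℤ) hxZ1
      have h2 := abs_eval_le Q₂ (yn:ℤ) hyZ1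
      calc F n m ≤ |F n m| := le_abs_self _
        _ = |Q₁.eval (xn:ℤ)| * |Q₂.eval (yn:ℤ)| := by
            rw [hF n m, hxz, hyz, abs_mul]
        _ ≤ C₁ * (xn:ℤ)^D₁ * (C₂ * (yn:ℤ)^D₂) :=
            mul_le_mul h1 h2 (abs_nonneg _) (by positivity)
    -- move to the reals
    have hX1 : (1:ℝ) ≤ (xn:ℝ) := by exact_mod_cast hxn1
    have hY1 : (1:ℝ) ≤ (yn:ℝ) := by exact_mod_cast hyn1
    have hX0 : (0:ℝ) < (xn:ℝ) := lt_of_lt_of_le one_pos hX1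
    have hY0 : (0:ℝ) < (yn:ℝ) := lt_of_lt_of_le one_pos hY1
    have hFR0 : (0:ℝ) < ((F n m : ℤ) : ℝ) := by exact_mod_cast hFnm
    have hNR1 : (1:ℝ) ≤ (natRadical (F n m).natAbs : ℝ) := by
      exact_mod_cast natRadical_pos (F n m).natAbs
    have hRR1 : (1:ℝ) ≤ (r.natAbs : ℝ) := by
      exact_mod_cast Nat.one_le_iff_ne_zero.mpr hr0
    have hRRr : ((r.natAbs : ℕ) : ℝ) = ((r : ℤ) : ℝ) := by
      simp [Nat.cast_natAbs, abs_of_nonneg hr.le]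
    have hFRfac : ((F n m : ℤ) : ℝ) = (xn:ℝ)^p * (yn:ℝ)^q * (r.natAbs : ℝ) := by
      rw [hRRr, hFeq]; push_cast; ring
    have hNF : (natRadical (F n m).natAbs : ℝ) ≤ ((F n m : ℤ) : ℝ) := by
      have h1 : natRadical (F n m).natAbs ≤ (F n m).natAbs :=
        natRadical_le (Int.natAbs_pos.mpr hFnm.ne')
      have h2 : (((F n m).natAbs : ℕ) : ℝ) = ((F n m : ℤ) : ℝ) := by
        simp [Nat.cast_natAbs, abs_of_nonneg hFnm.le]
      calc (natRadical (F n m).natAbs : ℝ) ≤ (((F n m).natAbs : ℕ) : ℝ) := by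
            exact_mod_cast h1
        _ = ((F n m : ℤ) : ℝ) := h2
    have hNR_le : (natRadical (F n m).natAbs : ℝ) ≤
        (A:ℝ) * 4^n * ((B:ℝ) * 4^m) * (r.natAbs : ℝ) := by
      calc (natRadical (F n m).natAbs : ℝ)
          ≤ (((A * 4^n) * (B * 4^m) * r.natAbs : ℕ) : ℝ) := by exact_mod_cast hN
        _ = (A:ℝ) * 4^n * ((B:ℝ) * 4^m) * (r.natAbs : ℝ) := by push_cast; ring
    have hFub_r : ((F n m : ℤ) : ℝ) ≤ (C₁:ℝ) * (xn:ℝ)^D₁ * ((C₂:ℝ) * (yn:ℝ)^D₂) := by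
      exact_mod_cast hFub
    -- bound FR^ε
    have hXe : ((xn:ℝ)^D₁) ^ ε ≤ (xn:ℝ) ^ ((p:ℝ)/2) := by
      rw [← Real.rpow_natCast (xn:ℝ) D₁, ← Real.rpow_mul hX0.le]
      exact Real.rpow_le_rpow_of_exponent_le hX1 hεD1
    have hYe : ((yn:ℝ)^D₂) ^ ε ≤ (yn:ℝ) ^ ((q:ℝ)/2) := by
      rw [← Real.rpow_natCast (yn:ℝ) D₂, ← Real.rpow_mul hY0.le]
      exact Real.rpow_le_rpow_of_exponent_le hY1 hεD2
    have hC₁e : (C₁:ℝ) ^ ε ≤ (C₁:ℝ) := by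
      calc (C₁:ℝ) ^ ε ≤ (C₁:ℝ) ^ (1:ℝ) := Real.rpow_le_rpow_of_exponent_le hC₁ hε1
        _ = (C₁:ℝ) := Real.rpow_one _
    have hC₂e : (C₂:ℝ) ^ ε ≤ (C₂:ℝ) := by
      calc (C₂:ℝ) ^ ε ≤ (C₂:ℝ) ^ (1:ℝ) := Real.rpow_le_rpow_of_exponent_le hC₂ hε1
        _ = (C₂:ℝ) := Real.rpow_one _
    have hC₁0 : (0:ℝ) ≤ (C₁:ℝ) := by linarith
    have hC₂0 : (0:ℝ) ≤ (C₂:ℝ) := by linarith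
    have hFeps : ((F n m : ℤ) : ℝ) ^ ε ≤
        (C₁:ℝ) * (xn:ℝ) ^ ((p:ℝ)/2) * ((C₂:ℝ) * (yn:ℝ) ^ ((q:ℝ)/2)) := by
      calc ((F n m : ℤ) : ℝ) ^ ε ≤ ((C₁:ℝ) * (xn:ℝ)^D₁ * ((C₂:ℝ) * (yn:ℝ)^D₂)) ^ ε :=
            Real.rpow_le_rpow hFR0.le hFub_r hε0.le
        _ = (C₁:ℝ)^ε * ((xn:ℝ)^D₁)^ε * ((C₂:ℝ)^ε * ((yn:ℝ)^D₂)^ε) := by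
            rw [Real.mul_rpow (by positivity) (by positivity),
              Real.mul_rpow hC₁0 (by positivity), Real.mul_rpow hC₂0 (by positivity)]
        _ ≤ (C₁:ℝ) * (xn:ℝ) ^ ((p:ℝ)/2) * ((C₂:ℝ) * (yn:ℝ) ^ ((q:ℝ)/2)) := by
            have h3 : (0:ℝ) ≤ ((xn:ℝ)^D₁)^ε := Real.rpow_nonneg (by positivity) _
            have h4 : (0:ℝ) ≤ ((yn:ℝ)^D₂)^ε := Real.rpow_nonneg (by positivity) _
            have h1 : (0:ℝ) ≤ (C₁:ℝ)^ε := Real.rpow_nonneg hC₁0 _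
            have h2 : (0:ℝ) ≤ (C₂:ℝ)^ε := Real.rpow_nonneg hC₂0 _
            have hx2 : (0:ℝ) ≤ (xn:ℝ) ^ ((p:ℝ)/2) := Real.rpow_nonneg hX0.le _
            have hy2 : (0:ℝ) ≤ (yn:ℝ) ^ ((q:ℝ)/2) := Real.rpow_nonneg hY0.le _
            exact mul_le_mul (mul_le_mul hC₁e hXe h3 hC₁0)
              (mul_le_mul hC₂e hYe h4 hC₂0)
              (mul_nonneg h2 h4) (mul_nonneg hC₁0 hx2)
    -- main bound on NR^(1+ε)
    have hmain : (natRadical (F n m).natAbs : ℝ) ^ ((1:ℝ) + ε) ≤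
        ((A:ℝ) * 4^n * ((B:ℝ) * 4^m) * (r.natAbs : ℝ)) *
          ((C₁:ℝ) * (xn:ℝ) ^ ((p:ℝ)/2) * ((C₂:ℝ) * (yn:ℝ) ^ ((q:ℝ)/2))) := by
      have e1 : (natRadical (F n m).natAbs : ℝ) ^ ((1:ℝ) + ε)
          = (natRadical (F n m).natAbs : ℝ) * (natRadical (F n m).natAbs : ℝ) ^ ε := by
        rw [Real.rpow_add (lt_of_lt_of_le one_pos hNR1), Real.rpow_one]
      rw [e1]
      have e2 : (natRadical (F n m).natAbs : ℝ) ^ ε ≤ ((F n m : ℤ) : ℝ) ^ ε :=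
        Real.rpow_le_rpow (by linarith) hNF hε0.le
      have hA0 : (0:ℝ) ≤ (A:ℝ) := by positivity
      have hB0 : (0:ℝ) ≤ (B:ℝ) := by positivity
      exact mul_le_mul hNR_le (le_trans e2 hFeps)
        (Real.rpow_nonneg (by linarith) _) (by positivity)
    -- sqrt estimates
    have hfacX : (n.factorial : ℝ) ≤ (xn:ℝ) := by
      have : n.factorial ≤ xn := Nat.le_mul_of_pos_left _ (by positivity)
      exact_mod_cast this
    have hfacY : (m.factorial : ℝ) ≤ (yn:ℝ) := by
      have : m.factorial ≤ yn := Nat.le_mul_of_pos_left _ (by positivity)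
      exact_mod_cast this
    have hsX : Real.sqrt n.factorial ≤ (xn:ℝ) ^ ((p:ℝ)/2) := by
      rw [Real.sqrt_eq_rpow]
      calc (n.factorial : ℝ) ^ ((1:ℝ)/2) ≤ (xn:ℝ) ^ ((1:ℝ)/2) :=
            Real.rpow_le_rpow (by positivity) hfacX (by norm_num)
        _ ≤ (xn:ℝ) ^ ((p:ℝ)/2) := by
            refine Real.rpow_le_rpow_of_exponent_le hX1 ?_
            have : (1:ℝ) ≤ (p:ℝ) := by exact_mod_cast hp
            linarith
    have hsY : Real.sqrt m.factorial ≤ (yn:ℝ) ^ ((q:ℝ)/2) := by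
      rw [Real.sqrt_eq_rpow]
      calc (m.factorial : ℝ) ^ ((1:ℝ)/2) ≤ (yn:ℝ) ^ ((1:ℝ)/2) :=
            Real.rpow_le_rpow (by positivity) hfacY (by norm_num)
        _ ≤ (yn:ℝ) ^ ((q:ℝ)/2) := by
            refine Real.rpow_le_rpow_of_exponent_le hY1 ?_
            have : (1:ℝ) ≤ (q:ℝ) := by exact_mod_cast hq
            linarith
    have hXhalf : (xn:ℝ) ^ ((p:ℝ)/2) * (xn:ℝ) ^ ((p:ℝ)/2) = (xn:ℝ) ^ p := by
      rw [← Real.rpow_add hX0, ← Real.rpow_natCast (xn:ℝ) p]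
      norm_num
    have hYhalf : (yn:ℝ) ^ ((q:ℝ)/2) * (yn:ℝ) ^ ((q:ℝ)/2) = (yn:ℝ) ^ q := by
      rw [← Real.rpow_add hY0, ← Real.rpow_natCast (yn:ℝ) q]
      norm_num
    -- finish
    rw [div_le_iff₀ hFR0, hFRfac]
    have hsfX : 0 < Real.sqrt n.factorial := Real.sqrt_pos.mpr (by positivity)
    have hsfY : 0 < Real.sqrt m.factorial := Real.sqrt_pos.mpr (by positivity)
    have hXx : (xn:ℝ) ^ ((p:ℝ)/2) ≤ (xn:ℝ) ^ p / Real.sqrt n.factorial := by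
      rw [le_div_iff₀ hsfX, ← hXhalf]
      exact mul_le_mul_of_nonneg_left hsX (Real.rpow_nonneg hX0.le _)
    have hYy : (yn:ℝ) ^ ((q:ℝ)/2) ≤ (yn:ℝ) ^ q / Real.sqrt m.factorial := by
      rw [le_div_iff₀ hsfY, ← hYhalf]
      exact mul_le_mul_of_nonneg_left hsY (Real.rpow_nonneg hY0.le _)
    have hRR0 : (0:ℝ) ≤ (r.natAbs : ℝ) := by positivity
    have hxp2 : (0:ℝ) ≤ (xn:ℝ) ^ ((p:ℝ)/2) := Real.rpow_nonneg hX0.le _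
    have hyq2 : (0:ℝ) ≤ (yn:ℝ) ^ ((q:ℝ)/2) := Real.rpow_nonneg hY0.le _
    calc (natRadical (F n m).natAbs : ℝ) ^ ((1:ℝ) + ε)
        ≤ ((A:ℝ) * 4^n * ((B:ℝ) * 4^m) * (r.natAbs : ℝ)) *
          ((C₁:ℝ) * (xn:ℝ) ^ ((p:ℝ)/2) * ((C₂:ℝ) * (yn:ℝ) ^ ((q:ℝ)/2))) := hmain
      _ = (K * (r.natAbs : ℝ)) * ((4:ℝ)^n * (xn:ℝ) ^ ((p:ℝ)/2)) *
            ((4:ℝ)^m * (yn:ℝ) ^ ((q:ℝ)/2)) := by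
          rw [hKdef]; ring
      _ ≤ (K * (r.natAbs : ℝ)) * ((4:ℝ)^n * ((xn:ℝ) ^ p / Real.sqrt n.factorial)) *
            ((4:ℝ)^m * ((yn:ℝ) ^ q / Real.sqrt m.factorial)) := by
          have hKR : (0:ℝ) ≤ K * (r.natAbs : ℝ) := mul_nonneg hK0.le hRR0
          refine mul_le_mul (mul_le_mul le_rfl ?_ (by positivity) hKR) ?_ (by positivity) ?_
          · exact mul_le_mul_of_nonneg_left hXx (by positivity)
          · exact mul_le_mul_of_nonneg_left hYy (by positivity)
          · have h1 : (0:ℝ) ≤ (xn:ℝ) ^ p / Real.sqrt n.factorial := by positivity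
            positivity
      _ = K * ((4:ℝ)^n / Real.sqrt n.factorial * ((4:ℝ)^m / Real.sqrt m.factorial)) *
            ((xn:ℝ)^p * (yn:ℝ)^q * (r.natAbs : ℝ)) := by ring
  -- conclude via squeeze
  have hgn : Tendsto (fun nm : ℕ × ℕ =>
      K * ((4:ℝ)^nm.1 / Real.sqrt nm.1.factorial * ((4:ℝ)^nm.2 / Real.sqrt nm.2.factorial)))
      (atTop ×ˢ atTop) (nhds 0) := by
    have h1 := (tendsto_four_pow_div_sqrt_factorial.comp
      (tendsto_fst : Tendsto Prod.fst (atTop ×ˢ atTop) atTop)).mul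
      (tendsto_four_pow_div_sqrt_factorial.comp
      (tendsto_snd : Tendsto Prod.snd (atTop ×ˢ atTop) atTop))
    have h2 := h1.const_mul K
    simpa using h2
  have hev : ∀ᶠ nm : ℕ × ℕ in atTop ×ˢ atTop,
      1 ≤ nm.1 ∧ 1 ≤ nm.2 ∧ 0 < F nm.1 nm.2 := by
    filter_upwards [(tendsto_fst : Tendsto Prod.fst (atTop ×ˢ atTop) atTop).eventually
        (eventually_ge_atTop 1),
      (tendsto_snd : Tendsto Prod.snd (atTop ×ˢ atTop) atTop).eventually
        (eventually_ge_atTop 1), hFpos] with nm h1 h2 h3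
    exact ⟨h1, h2, h3⟩
  refine squeeze_zero' ?_ ?_ hgn
  · filter_upwards [hev] with nm ⟨h1, h2, h3⟩
    have hF0 : (0:ℝ) < (F nm.1 nm.2 : ℝ) := by exact_mod_cast h3
    positivity
  · filter_upwards [hev] with nm ⟨h1, h2, h3⟩
    exact key nm.1 nm.2 h1 h2 h3
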